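/- arXiv:2008.09498 — 3 statements merged into one kernel-verified Lean document; each statement's English description precedes it below -/
import Mathlib

section
/- Let X = (X₁, X₂, X_J) be a random vector where X₁, X₂ are real-valued and X_J takes values in ℝ^{d−2}. If the subsets A_{1,J}, …, A_{m,J} are pairwise disjoint, then the covariance matrix Δ with entries Δ_{k,l} = 64·[ I_{k,l}/(p_k p_l) + D_k D_l p_{k,l}/(p_k³ p_l³) − D_l J_{k,l}/(p_k p_l³) − D_k J_{l,k}/(p_l p_k³) ] is diagonal, with k-th diagonal entry Δ_k = 16·( 4 I_{k,k}/p_k² − (1 + τ_{1,2|X_J∈A_{k,J}})²/(4 p_k) ), provided the conditional distributions of X₁ and of X₂ given X_J ∈ A_{k,J} are continuous for every k. -/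
/- Common framework: conditional Kendall's tau given discretized conditioning events.

An observation is a pair `(x_I, x_J) : (Fin p → ℝ) × (Fin dJ → ℝ)`, where `x_I` is the
conditioned vector and `x_J` the conditioning vector. -/

open MeasureTheory ProbabilityTheory Filter Finset
open scoped Topology Classical

noncomputable section

/-- The space of one observation `X = (X_I, X_J)`. -/
abbrev RVec (p dJ : ℕ) : Type := (Fin p → ℝ) × (Fin dJ → ℝ)

namespace CondKT

variable {p dJ : ℕ}

/-- The symmetrized concordance kernel `π_{a,b}(x,y)`. -/
def kerPi (a b : Fin p) (x y : RVec p dJ) : ℝ :=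
  ((if x.1 a < y.1 a ∧ x.1 b < y.1 b then (1 : ℝ) else 0) +
    (if y.1 a < x.1 a ∧ y.1 b < x.1 b then (1 : ℝ) else 0)) / 2

/-- `p_k = P(X_J ∈ A)`, where `ν` is the law of `X`. -/
def pA (ν : Measure (RVec p dJ)) (A : Set (Fin dJ → ℝ)) : ℝ :=
  (ν {x | x.2 ∈ A}).toReal

/-- `D_{a,b,k} = P(X_{1,a} < X_{2,a}, X_{1,b} < X_{2,b}, X_{1,J} ∈ A, X_{2,J} ∈ A)`
for two independent copies `X_1, X_2` with law `ν`. -/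
def Dab (ν : Measure (RVec p dJ)) (a b : Fin p) (A : Set (Fin dJ → ℝ)) : ℝ :=
  ((ν.prod ν) {q | q.1.1 a < q.2.1 a ∧ q.1.1 b < q.2.1 b ∧ q.1.2 ∈ A ∧ q.2.2 ∈ A}).toReal

/-- `P_k`: the conditional law of `X` given `X_J ∈ A`. -/
def PA (ν : Measure (RVec p dJ)) (A : Set (Fin dJ → ℝ)) : Measure (RVec p dJ) :=
  ν[|{x | x.2 ∈ A}]

/-- `I_{a,b,a',b',k,l} = ∫ 1{z_J ∈ A_k ∩ A_l} π_{a,b}(x,z) π_{a',b'}(y,z) P_k(dx) P_l(dy) P(dz)`. -/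
def Iq (ν : Measure (RVec p dJ)) (a b a' b' : Fin p) (Ak Al : Set (Fin dJ → ℝ)) : ℝ :=
  ∫ x, ∫ y, ∫ z, (if z.2 ∈ Ak ∩ Al then (1 : ℝ) else 0) * kerPi a b x z * kerPi a' b' y z
    ∂ν ∂(PA ν Al) ∂(PA ν Ak)

/-- `J_{a,b,k,l} = ∫ 1{y_J ∈ A_k ∩ A_l} π_{a,b}(x,y) P_k(dx) P(dy)`. -/
def Jq (ν : Measure (RVec p dJ)) (a b : Fin p) (Ak Al : Set (Fin dJ → ℝ)) : ℝ :=
  ∫ x, ∫ y, (if y.2 ∈ Ak ∩ Al then (1 : ℝ) else 0) * kerPi a b x y ∂ν ∂(PA ν Ak)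

/-- `p_{k,l} = P(X_J ∈ A_k ∩ A_l)`. -/
def pAA (ν : Measure (RVec p dJ)) (Ak Al : Set (Fin dJ → ℝ)) : ℝ :=
  (ν {x | x.2 ∈ Ak ∧ x.2 ∈ Al}).toReal

/-- The conditional Kendall's tau `τ_{a,b | X_J ∈ A}`:
`P((X_{1,a}-X_{2,a})(X_{1,b}-X_{2,b}) > 0 | X_{1,J} ∈ A, X_{2,J} ∈ A)
  - P((X_{1,a}-X_{2,a})(X_{1,b}-X_{2,b}) < 0 | X_{1,J} ∈ A, X_{2,J} ∈ A)`. -/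
def condTau (ν : Measure (RVec p dJ)) (a b : Fin p) (A : Set (Fin dJ → ℝ)) : ℝ :=
  (((ν.prod ν)[|{q : RVec p dJ × RVec p dJ | q.1.2 ∈ A ∧ q.2.2 ∈ A}])
      {q : RVec p dJ × RVec p dJ | 0 < (q.1.1 a - q.2.1 a) * (q.1.1 b - q.2.1 b)}).toReal -
    (((ν.prod ν)[|{q : RVec p dJ × RVec p dJ | q.1.2 ∈ A ∧ q.2.2 ∈ A}])
      {q : RVec p dJ × RVec p dJ | (q.1.1 a - q.2.1 a) * (q.1.1 b - q.2.1 b) < 0}).toReal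

/-- The conditional distribution of the coordinate `X_a` given `X_J ∈ A` is continuous
(i.e. has no atoms). -/
def CondMarginContinuous (ν : Measure (RVec p dJ)) (a : Fin p) (A : Set (Fin dJ → ℝ)) : Prop :=
  ∀ t : ℝ, PA ν A {x | x.1 a = t} = 0

variable {Ω : Type*} [MeasurableSpace Ω]

/-- `N_{k,n}`: the number of sample points (among `X 0, …, X (n-1)`) falling in the
conditioning event `A`. -/
def NA (X : ℕ → Ω → RVec p dJ) (A : Set (Fin dJ → ℝ)) (n : ℕ) (ω : Ω) : ℝ :=
  ∑ i ∈ Finset.range n, if (X i ω).2 ∈ A then (1 : ℝ) else 0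

/-- The weights `w^{(k)}_{i,n} = 1{X_{i,J} ∈ A} / N_{k,n}`. -/
def wA (X : ℕ → Ω → RVec p dJ) (A : Set (Fin dJ → ℝ)) (n i : ℕ) (ω : Ω) : ℝ :=
  (if (X i ω).2 ∈ A then (1 : ℝ) else 0) / NA X A n ω

/-- `s^{(k)}_n = Σ_i (w^{(k)}_{i,n})²`. -/
def sA (X : ℕ → Ω → RVec p dJ) (A : Set (Fin dJ → ℝ)) (n : ℕ) (ω : Ω) : ℝ :=
  ∑ i ∈ Finset.range n, (wA X A n i ω) ^ 2

/-- The estimator `τ̂^{(1)}`. -/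
def tauHat1 (X : ℕ → Ω → RVec p dJ) (a b : Fin p) (A : Set (Fin dJ → ℝ)) (n : ℕ) (ω : Ω) : ℝ :=
  4 * ∑ i ∈ Finset.range n, ∑ j ∈ Finset.range n, wA X A n i ω * wA X A n j ω *
      (if (X i ω).1 a < (X j ω).1 a ∧ (X i ω).1 b < (X j ω).1 b then (1 : ℝ) else 0) - 1

/-- The estimator `τ̂^{(2)}`. -/
def tauHat2 (X : ℕ → Ω → RVec p dJ) (a b : Fin p) (A : Set (Fin dJ → ℝ)) (n : ℕ) (ω : Ω) : ℝ :=
  ∑ i ∈ Finset.range n, ∑ j ∈ Finset.range n, wA X A n i ω * wA X A n j ω *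
      ((if 0 < ((X i ω).1 a - (X j ω).1 a) * ((X i ω).1 b - (X j ω).1 b) then (1 : ℝ) else 0) -
        (if ((X i ω).1 a - (X j ω).1 a) * ((X i ω).1 b - (X j ω).1 b) < 0 then (1 : ℝ) else 0))

/-- The estimator `τ̂^{(3)}`. -/
def tauHat3 (X : ℕ → Ω → RVec p dJ) (a b : Fin p) (A : Set (Fin dJ → ℝ)) (n : ℕ) (ω : Ω) : ℝ :=
  1 - 4 * ∑ i ∈ Finset.range n, ∑ j ∈ Finset.range n, wA X A n i ω * wA X A n j ω *
      (if (X i ω).1 a < (X j ω).1 a ∧ (X j ω).1 b < (X i ω).1 b then (1 : ℝ) else 0)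

/-- The rescaled estimator `τ̂ = τ̂^{(2)} / (1 - s^{(k)}_n)` of the conditional Kendall's tau. -/
def tauHat (X : ℕ → Ω → RVec p dJ) (a b : Fin p) (A : Set (Fin dJ → ℝ)) (n : ℕ) (ω : Ω) : ℝ :=
  tauHat2 X a b A n ω / (1 - sA X A n ω)

/-- The U-statistic `D̂_{a,b,k}`. -/
def DHat (X : ℕ → Ω → RVec p dJ) (a b : Fin p) (A : Set (Fin dJ → ℝ)) (n : ℕ) (ω : Ω) : ℝ :=
  (∑ i ∈ Finset.range n, ∑ j ∈ Finset.range n,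
      if i ≠ j ∧ (X i ω).1 a < (X j ω).1 a ∧ (X i ω).1 b < (X j ω).1 b ∧
          (X i ω).2 ∈ A ∧ (X j ω).2 ∈ A then (1 : ℝ) else 0) /
    ((n : ℝ) * ((n : ℝ) - 1))

/-- The empirical probability `p̂_k`. -/
def pHat (X : ℕ → Ω → RVec p dJ) (A : Set (Fin dJ → ℝ)) (n : ℕ) (ω : Ω) : ℝ :=
  (∑ i ∈ Finset.range n, if (X i ω).2 ∈ A then (1 : ℝ) else 0) / n

/-- `μ` is the centered Gaussian distribution on `ι → ℝ` with covariance matrix `S`,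
characterized through its one-dimensional projections (Cramér–Wold). -/
def IsCenteredGaussianLaw {ι : Type*} [Fintype ι] (μ : Measure (ι → ℝ))
    (S : Matrix ι ι ℝ) : Prop :=
  IsProbabilityMeasure μ ∧
    ∀ a : ι → ℝ, μ.map (fun x => ∑ i, a i * x i) =
      gaussianReal 0 (∑ i, ∑ j, a i * S i j * a j).toNNReal

/-- Convergence in distribution of the random elements `Z n` towards the law `μ`. -/
def TendstoInDistrib {E : Type*} [MeasurableSpace E] [TopologicalSpace E]
    (P : Measure Ω) (Z : ℕ → Ω → E) (μ : Measure E) : Prop :=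
  ∀ f : BoundedContinuousFunction E ℝ,
    Tendsto (fun n => ∫ ω, f (Z n ω) ∂P) atTop (𝓝 (∫ x, f x ∂μ))

/-- The chi-squared distribution with `k` degrees of freedom. -/
def chiSquared (k : ℝ) : Measure ℝ := gammaMeasure (k / 2) (1 / 2)

/-- The `(m-1) × m` contrast matrix `T = [1_{m-1} : -I_{m-1}]`. -/
def contrastT (m : ℕ) : Matrix (Fin (m - 1)) (Fin m) ℝ := fun i j =>
  if (j : ℕ) = 0 then 1 else if (j : ℕ) = (i : ℕ) + 1 then -1 else 0

/-- The index set of pairs `(a,b)` with `a < b` in `Fin p`. -/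
abbrev PairIdx (p : ℕ) : Type := {q : Fin p × Fin p // q.1 < q.2}

end CondKT

open CondKT

/-!
Off the diagonal, disjointness of `A k` and `A l` makes `I_{k,l}`, `J_{k,l}` and `p_{k,l}` vanish.
On the diagonal, `π(x, y)` is half the indicator that `(x, y)` is a concordant pair, and by
exchangeability of two independent copies the concordant pairs in `A_k × A_k` have mass `2 D_k`.
Hence `J_{k,k} = D_k / p_k`; and since continuous margins make ties null, concordant and
discordant pairs exhaust `A_k × A_k`, so `1 + τ_k = 2 P(concordant | A_k × A_k) = 4 D_k / p_k²`.
Substituting both identities into `Δ_{k,k}` gives the diagonal entry.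
-/

lemma ProbabilityTheory.cond_prod_apply {α β : Type*} [MeasurableSpace α] [MeasurableSpace β]
    (μ : Measure α) (ν : Measure β) [SFinite μ] [SFinite ν] (s : Set α) {t : Set (α × β)}
    (ht : MeasurableSet t) :
    (μ[|s]).prod ν t = (μ s)⁻¹ * μ.prod ν (s ×ˢ Set.univ ∩ t) := by
  rw [ProbabilityTheory.cond, Measure.prod_smul_left, Measure.smul_apply, smul_eq_mul,
    ← Measure.restrict_univ (μ := ν), Measure.prod_restrict, Measure.restrict_apply ht,
    Set.inter_comm, Measure.restrict_univ]

namespace CondKT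

variable {p dJ : ℕ}

def concordantPairs (a b : Fin p) : Set (RVec p dJ × RVec p dJ) :=
  {q | 0 < (q.1.1 a - q.2.1 a) * (q.1.1 b - q.2.1 b)}

def discordantPairs (a b : Fin p) : Set (RVec p dJ × RVec p dJ) :=
  {q | (q.1.1 a - q.2.1 a) * (q.1.1 b - q.2.1 b) < 0}

lemma measurableSet_concordantPairs (a b : Fin p) :
    MeasurableSet (concordantPairs (dJ := dJ) a b) :=
  measurableSet_lt measurable_const (by fun_prop)

lemma measurableSet_discordantPairs (a b : Fin p) :
    MeasurableSet (discordantPairs (dJ := dJ) a b) :=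
  measurableSet_lt (by fun_prop) measurable_const

lemma measurableSet_condEvent {A : Set (Fin dJ → ℝ)} (hA : MeasurableSet A) :
    MeasurableSet {x : RVec p dJ | x.2 ∈ A} :=
  hA.preimage measurable_snd

lemma kerPi_eq_indicator (a b : Fin p) (x y : RVec p dJ) :
    kerPi a b x y = (concordantPairs a b).indicator (fun _ => 1 / 2) (x, y) := by
  simp only [kerPi, concordantPairs, Set.indicator_apply, Set.mem_ofPred_eq, mul_pos_iff,
    sub_pos, sub_neg]
  split_ifs <;> grind

lemma inter_concordantPairs_eq_union (a b : Fin p) (A : Set (Fin dJ → ℝ)) :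
    {x : RVec p dJ | x.2 ∈ A} ×ˢ {x | x.2 ∈ A} ∩ concordantPairs a b =
      {q | q.1.1 a < q.2.1 a ∧ q.1.1 b < q.2.1 b ∧ q.1.2 ∈ A ∧ q.2.2 ∈ A} ∪
        Prod.swap ⁻¹' {q | q.1.1 a < q.2.1 a ∧ q.1.1 b < q.2.1 b ∧ q.1.2 ∈ A ∧ q.2.2 ∈ A} := by
  ext q
  simp only [concordantPairs, Set.mem_inter_iff, Set.mem_prod, Set.mem_ofPred_eq, Set.mem_union,
    Set.mem_preimage, Prod.fst_swap, Prod.snd_swap, mul_pos_iff, sub_pos, sub_neg]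
  tauto

lemma measure_concordantPairs_add_discordantPairs (μ : Measure (RVec p dJ × RVec p dJ))
    [IsProbabilityMeasure μ] {a b : Fin p} (ha : μ {q | q.1.1 a = q.2.1 a} = 0)
    (hb : μ {q | q.1.1 b = q.2.1 b} = 0) :
    μ (concordantPairs a b) + μ (discordantPairs a b) = 1 := by
  have hdisj : Disjoint (concordantPairs (dJ := dJ) a b) (discordantPairs a b) :=
    Set.disjoint_left.2 fun _ hc hd => lt_asymm (α := ℝ) hc hd
  have hties : (concordantPairs a b ∪ discordantPairs a b)ᶜ ⊆
      {q : RVec p dJ × RVec p dJ | q.1.1 a = q.2.1 a} ∪ {q | q.1.1 b = q.2.1 b} := by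
    intro q hq
    simp only [concordantPairs, discordantPairs, Set.mem_compl_iff, Set.mem_union,
      Set.mem_ofPred_eq, not_or, not_lt] at hq
    rcases mul_eq_zero.1 (le_antisymm hq.1 hq.2) with h | h
    · exact Or.inl (sub_eq_zero.1 h)
    · exact Or.inr (sub_eq_zero.1 h)
  rw [← measure_union hdisj (measurableSet_discordantPairs a b), ← prob_compl_eq_zero_iff
    ((measurableSet_concordantPairs a b).union (measurableSet_discordantPairs a b))]
  exact measure_mono_null hties (measure_union_null ha hb)

variable (ν : Measure (RVec p dJ))

lemma pAA_self (A : Set (Fin dJ → ℝ)) : pAA ν A A = pA ν A := by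
  simp [pAA, pA]

lemma pAA_eq_zero_of_inter_eq_empty {Ak Al : Set (Fin dJ → ℝ)} (h : Ak ∩ Al = ∅) :
    pAA ν Ak Al = 0 := by
  simp [pAA, ← Set.mem_inter_iff, h]

variable [IsFiniteMeasure ν]

lemma measureReal_inter_concordantPairs (a b : Fin p) {A : Set (Fin dJ → ℝ)}
    (hA : MeasurableSet A) :
    (ν.prod ν).real ({x : RVec p dJ | x.2 ∈ A} ×ˢ {x | x.2 ∈ A} ∩ concordantPairs a b) =
      2 * Dab ν a b A := by
  have hC : MeasurableSet
      {q : RVec p dJ × RVec p dJ | q.1.1 a < q.2.1 a ∧ q.1.1 b < q.2.1 b ∧ q.1.2 ∈ A ∧ q.2.2 ∈ A} :=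
    by measurability
  have hdisj : Disjoint
      {q : RVec p dJ × RVec p dJ | q.1.1 a < q.2.1 a ∧ q.1.1 b < q.2.1 b ∧ q.1.2 ∈ A ∧ q.2.2 ∈ A}
      (Prod.swap ⁻¹' {q | q.1.1 a < q.2.1 a ∧ q.1.1 b < q.2.1 b ∧ q.1.2 ∈ A ∧ q.2.2 ∈ A}) :=
    Set.disjoint_left.2 fun _ h h' => lt_asymm h.1 h'.1
  rw [inter_concordantPairs_eq_union, measureReal_union hdisj (hC.preimage measurable_swap),
    measureReal_def, measureReal_def,
    (Measure.measurePreserving_swap (μ := ν) (ν := ν)).measure_preimage hC.nullMeasurableSet,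
    Dab, two_mul]

lemma Jq_self_eq (a b : Fin p) {A : Set (Fin dJ → ℝ)} (hA : MeasurableSet A) :
    Jq ν a b A A = Dab ν a b A / pA ν A := by
  set F : Set (RVec p dJ × RVec p dJ) := {q | q.2.2 ∈ A} ∩ concordantPairs a b
  have hF : MeasurableSet F :=
    (hA.preimage (by fun_prop)).inter (measurableSet_concordantPairs a b)
  have hintegrand : ∀ x y : RVec p dJ, (if y.2 ∈ A ∩ A then (1 : ℝ) else 0) * kerPi a b x y =
      F.indicator (fun _ => 1 / 2) (x, y) := by
    intro x y
    simp only [kerPi_eq_indicator, Set.inter_self, F, Set.indicator_apply, Set.mem_inter_iff,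
      Set.mem_ofPred_eq]
    split_ifs <;> simp_all
  have hF' : {x : RVec p dJ | x.2 ∈ A} ×ˢ Set.univ ∩ F =
      {x : RVec p dJ | x.2 ∈ A} ×ˢ {x | x.2 ∈ A} ∩ concordantPairs a b := by
    ext q
    simp [F, and_assoc]
  simp only [Jq, PA, hintegrand]
  rw [← integral_prod _ ((integrable_const _).indicator hF), integral_indicator_const _ hF,
    measureReal_def, cond_prod_apply _ _ _ hF, hF', ENNReal.toReal_mul, ENNReal.toReal_inv,
    ← measureReal_def, ← measureReal_def, measureReal_inter_concordantPairs ν a b hA, pA,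
    ← measureReal_def, smul_eq_mul]
  ring

lemma measure_prod_inter_tie_eq_zero {a : Fin p} {A : Set (Fin dJ → ℝ)} (hA : MeasurableSet A)
    (h : CondMarginContinuous ν a A) :
    (ν.prod ν) ({x : RVec p dJ | x.2 ∈ A} ×ˢ {x | x.2 ∈ A} ∩ {q | q.1.1 a = q.2.1 a}) = 0 := by
  have hslice : ∀ t, ν ({x : RVec p dJ | x.2 ∈ A} ∩ {x | x.1 a = t}) = 0 := fun t => by
    have ht := h t
    rw [PA, cond_apply (measurableSet_condEvent hA)] at ht
    exact (mul_eq_zero.1 ht).resolve_left (ENNReal.inv_ne_zero.2 (measure_ne_top _ _))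
  have hsection : ∀ x : RVec p dJ, ν (Prod.mk x ⁻¹'
      ({x : RVec p dJ | x.2 ∈ A} ×ˢ {x | x.2 ∈ A} ∩ {q | q.1.1 a = q.2.1 a})) = 0 :=
    fun x => measure_mono_null (fun y hy => by exact ⟨hy.1.2, hy.2.symm⟩) (hslice (x.1 a))
  rw [Measure.prod_apply (by measurability)]
  simp only [hsection, lintegral_zero]

lemma one_add_condTau (a b : Fin p) {A : Set (Fin dJ → ℝ)} (hA : MeasurableSet A)
    (hA0 : 0 < pA ν A) (ha : CondMarginContinuous ν a A) (hb : CondMarginContinuous ν b A) :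
    1 + condTau ν a b A = 4 * Dab ν a b A / pA ν A ^ 2 := by
  set S : Set (RVec p dJ) := {x | x.2 ∈ A}
  have hS : MeasurableSet (S ×ˢ S) :=
    (measurableSet_condEvent hA).prod (measurableSet_condEvent hA)
  have hS0 : (ν.prod ν) (S ×ˢ S) ≠ 0 := by
    rw [Measure.prod_prod]
    exact mul_ne_zero (fun h => by simp [pA, S, h] at hA0) (fun h => by simp [pA, S, h] at hA0)
  have := cond_isProbabilityMeasure hS0
  have hsum := measure_concordantPairs_add_discordantPairs ((ν.prod ν)[|S ×ˢ S])
    (by rw [cond_apply hS, measure_prod_inter_tie_eq_zero ν hA ha, mul_zero])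
    (by rw [cond_apply hS, measure_prod_inter_tie_eq_zero ν hA hb, mul_zero])
  have hsum' : ((ν.prod ν)[|S ×ˢ S] (concordantPairs a b)).toReal +
      ((ν.prod ν)[|S ×ˢ S] (discordantPairs a b)).toReal = 1 := by
    rw [← ENNReal.toReal_add (measure_ne_top _ _) (measure_ne_top _ _), hsum, ENNReal.toReal_one]
  have hconc : ((ν.prod ν)[|S ×ˢ S] (concordantPairs a b)).toReal =
      2 * Dab ν a b A / pA ν A ^ 2 := by
    rw [cond_apply hS, ENNReal.toReal_mul, ← measureReal_def,
      measureReal_inter_concordantPairs ν a b hA, Measure.prod_prod, ENNReal.toReal_inv,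
      ENNReal.toReal_mul, pA]
    ring
  change 1 + (((ν.prod ν)[|S ×ˢ S] (concordantPairs a b)).toReal -
    ((ν.prod ν)[|S ×ˢ S] (discordantPairs a b)).toReal) = _
  linear_combination 2 * hconc - hsum'

end CondKT

/-- **Diagonal form of the asymptotic covariance matrix `Δ` for disjoint conditioning
subsets (bivariate case).** Here `ν` is the law of the random vector `X = (X₁, X₂, X_J)`. -/
theorem stmt2 {dJ m : ℕ}
    (ν : Measure (RVec 2 dJ)) [IsProbabilityMeasure ν]
    (A : Fin m → Set (Fin dJ → ℝ)) (hA : ∀ k, MeasurableSet (A k))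
    (hp : ∀ k, 0 < pA ν (A k))
    (hdisj : ∀ k l, k ≠ l → A k ∩ A l = ∅)
    (hcont : ∀ k, CondMarginContinuous ν 0 (A k) ∧ CondMarginContinuous ν 1 (A k)) :
    (Matrix.of fun k l =>
        64 * (Iq ν 0 1 0 1 (A k) (A l) / (pA ν (A k) * pA ν (A l)) +
          Dab ν 0 1 (A k) * Dab ν 0 1 (A l) * pAA ν (A k) (A l) /
            (pA ν (A k) ^ 3 * pA ν (A l) ^ 3) -
          Dab ν 0 1 (A l) * Jq ν 0 1 (A k) (A l) / (pA ν (A k) * pA ν (A l) ^ 3) -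
          Dab ν 0 1 (A k) * Jq ν 0 1 (A l) (A k) / (pA ν (A l) * pA ν (A k) ^ 3))) =
      Matrix.diagonal (fun k =>
        16 * (4 * Iq ν 0 1 0 1 (A k) (A k) / pA ν (A k) ^ 2 -
          (1 + condTau ν 0 1 (A k)) ^ 2 / (4 * pA ν (A k)))) := by
  ext k l
  rcases eq_or_ne k l with rfl | hkl
  · rw [Matrix.of_apply, Matrix.diagonal_apply_eq, pAA_self, Jq_self_eq ν 0 1 (hA k),
      one_add_condTau ν 0 1 (hA k) (hp k) (hcont k).1 (hcont k).2]
    have hpk := (hp k).ne'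
    field_simp
    ring
  · have hkl' := hdisj k l hkl
    have hlk' := hdisj l k hkl.symm
    simp only [Matrix.of_apply, Matrix.diagonal_apply_ne _ hkl, Iq, Jq, hkl', hlk',
      pAA_eq_zero_of_inter_eq_empty ν hkl', Set.mem_empty_iff_false, if_false, zero_mul,
      integral_zero]
    ring
end
end

section
/- Let X = (X_I, X_J) be a random vector with X_I = (X₁, …, X_p) ∈ ℝ^p, p ≥ 2, and X_J ∈ ℝ^{d−p}, with the conditional distribution of each X_a given X_J ∈ A_{k,J} continuous for every a and k. If the subsets A_{1,J}, …, A_{m,J} are pairwise disjoint, then for every two pairs (a,b) and (a′,b′) with a < b and a′ < b′, the m×m block Δ_{(a,b),(a′,b′)} := 64·[ I_{a,b,a′,b′,k,l}/(p_k p_l) + D_{a,b,k} D_{a′,b′,l} p_{k,l}/(p_k³ p_l³) − D_{a′,b′,l} J_{a,b,k,l}/(p_k p_l³) − D_{a,b,k} J_{a′,b′,l,k}/(p_l p_k³) ]_{1≤k,l≤m} is diagonal, with k-th diagonal entry 16·( 4 I_{a,b,a′,b′,k,k}/p_k² − (1 + τ_{a,b|X_J∈A_{k,J}})(1 + τ_{a′,b′|X_J∈A_{k,J}})/(4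 p_k) ). -/
/- Common framework: conditional Kendall's tau given discretized conditioning events.

An observation is a pair `(x_I, x_J) : (Fin p → ℝ) × (Fin dJ → ℝ)`, where `x_I` is the
conditioned vector and `x_J` the conditioning vector. -/

open MeasureTheory ProbabilityTheory Filter Finset
open scoped Topology Classical

noncomputable section

open CondKT

/-!
Off the diagonal every entry involves `A k ∩ A l = ∅`, so `I`, `J` and `p_{k,l}` vanish. On the
diagonal two identities reduce the entry to the claimed one. First, `J_{a,b,k,k} = D_{a,b,k} / p_k`:
restricted to `x_J, y_J ∈ A`, the symmetrized kernel `π_{a,b}(x, y)` is the average of the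
concordance indicator at `(x, y)` and at `(y, x)`, and both orders have probability `D_{a,b,k}`
under the product law. Second, continuity of the conditional margins makes ties null, so a pair is
discordant exactly when it is not concordant, whence `τ_{a,b|A_k} = 4 D_{a,b,k} / p_k² - 1`.
-/

section ProdSelf

variable {α : Type*} [MeasurableSpace α] (μ : Measure α)

lemma measureReal_prod_swap_preimage [SFinite μ] {s : Set (α × α)} (hs : MeasurableSet s) :
    (μ.prod μ).real (Prod.swap ⁻¹' s) = (μ.prod μ).real s := by
  rw [measureReal_def, measureReal_def,
    Measure.measurePreserving_swap.measure_preimage hs.nullMeasurableSet]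

lemma integral_integral_symmetrized_indicator [IsFiniteMeasure μ] {s : Set (α × α)}
    (hs : MeasurableSet s) :
    ∫ x, ∫ y, (s.indicator 1 (x, y) + s.indicator 1 (y, x)) / 2 ∂μ ∂μ = (μ.prod μ).real s := by
  have hs' : MeasurableSet (Prod.swap ⁻¹' s) := measurable_swap hs
  have hint : ∀ t : Set (α × α), MeasurableSet t →
      Integrable (t.indicator (1 : α × α → ℝ)) (μ.prod μ) :=
    fun t ht => (integrable_const 1).indicator ht
  calc ∫ x, ∫ y, (s.indicator 1 (x, y) + s.indicator 1 (y, x)) / 2 ∂μ ∂μ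
      = ∫ q, (s.indicator 1 q + (Prod.swap ⁻¹' s).indicator 1 q) / 2 ∂μ.prod μ :=
        (integral_prod _ (((hint s hs).add (hint _ hs')).div_const 2)).symm
    _ = ((μ.prod μ).real s + (μ.prod μ).real (Prod.swap ⁻¹' s)) / 2 := by
        rw [integral_div, integral_add (hint s hs) (hint _ hs'), integral_indicator_one hs,
          integral_indicator_one hs']
    _ = (μ.prod μ).real s := by rw [measureReal_prod_swap_preimage μ hs]; ring

lemma ae_prod_ne_of_measure_inter_fiber_eq_zero [SFinite μ] {f : α → ℝ} (hf : Measurable f)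
    {S : Set α} (hS : MeasurableSet S) (h : ∀ t, μ (S ∩ f ⁻¹' {t}) = 0) :
    ∀ᵐ z ∂μ.prod μ, z.2 ∈ S → f z.1 ≠ f z.2 := by
  have hmeas : MeasurableSet {z : α × α | z.2 ∈ S → f z.1 ≠ f z.2} :=
    MeasurableSet.imp (p := fun z : α × α => z.2 ∈ S) (measurable_snd hS)
      (measurableSet_eq_fun (hf.comp measurable_fst) (hf.comp measurable_snd)).compl
  rw [Measure.ae_prod_iff_ae_ae hmeas]
  refine Filter.Eventually.of_forall fun x => ?_
  filter_upwards [measure_eq_zero_iff_ae_notMem.1 (h (f x))] with y hy hyS hxy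
  exact hy ⟨hyS, hxy.symm⟩

end ProdSelf

section Conditioning

variable {α : Type*} [MeasurableSpace α] {μ : Measure α} {s : Set α}

lemma measureReal_cond_apply (hs : MeasurableSet s) (t : Set α) :
    (μ[|s]).real t = (μ.real s)⁻¹ * μ.real (s ∩ t) := by
  rw [measureReal_def, cond_apply hs, ENNReal.toReal_mul, ENNReal.toReal_inv]
  rfl

lemma integral_cond (f : α → ℝ) :
    ∫ x, f x ∂μ[|s] = (μ.real s)⁻¹ * ∫ x in s, f x ∂μ := by
  rw [ProbabilityTheory.cond, integral_smul_measure, ENNReal.toReal_inv, smul_eq_mul]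
  rfl

end Conditioning

namespace CondKT

variable {p dJ : ℕ}

def ltPairsIn (a b : Fin p) (A : Set (Fin dJ → ℝ)) : Set (RVec p dJ × RVec p dJ) :=
  {q | q.1.1 a < q.2.1 a ∧ q.1.1 b < q.2.1 b ∧ q.1.2 ∈ A ∧ q.2.2 ∈ A}

def pairsIn (A : Set (Fin dJ → ℝ)) : Set (RVec p dJ × RVec p dJ) :=
  {q | q.1.2 ∈ A ∧ q.2.2 ∈ A}

def concordant (a b : Fin p) : Set (RVec p dJ × RVec p dJ) :=
  {q | 0 < (q.1.1 a - q.2.1 a) * (q.1.1 b - q.2.1 b)}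

def discordant (a b : Fin p) : Set (RVec p dJ × RVec p dJ) :=
  {q | (q.1.1 a - q.2.1 a) * (q.1.1 b - q.2.1 b) < 0}

lemma measurableSet_ltPairsIn (a b : Fin p) {A : Set (Fin dJ → ℝ)} (hA : MeasurableSet A) :
    MeasurableSet (ltPairsIn a b A) := by
  unfold ltPairsIn
  measurability

lemma measurableSet_pairsIn {A : Set (Fin dJ → ℝ)} (hA : MeasurableSet A) :
    MeasurableSet (pairsIn (p := p) A) := by
  unfold pairsIn
  measurability

lemma measurableSet_concordant (a b : Fin p) :
    MeasurableSet (concordant (dJ := dJ) a b) := by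
  unfold concordant
  measurability

lemma kerPi_mul_indicator_eq (a b : Fin p) (A : Set (Fin dJ → ℝ)) (x y : RVec p dJ) :
    (if x.2 ∈ A then (1 : ℝ) else 0) * ((if y.2 ∈ A ∩ A then (1 : ℝ) else 0) * kerPi a b x y) =
      ((ltPairsIn a b A).indicator 1 (x, y) + (ltPairsIn a b A).indicator 1 (y, x)) / 2 := by
  unfold kerPi ltPairsIn
  by_cases hx : x.2 ∈ A <;> by_cases hy : y.2 ∈ A <;> simp [Set.indicator_apply, hx, hy]

variable (ν : Measure (RVec p dJ))

lemma pAA_eq_zero_of_disjoint {Ak Al : Set (Fin dJ → ℝ)} (h : Disjoint Ak Al) :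
    pAA ν Ak Al = 0 := by
  simp [pAA, ← Set.mem_inter_iff, Set.disjoint_iff_inter_eq_empty.1 h]

lemma Iq_eq_zero_of_disjoint (a b a' b' : Fin p) {Ak Al : Set (Fin dJ → ℝ)}
    (h : Disjoint Ak Al) : Iq ν a b a' b' Ak Al = 0 := by
  simp [Iq, Set.disjoint_iff_inter_eq_empty.1 h]

lemma Jq_eq_zero_of_disjoint (a b : Fin p) {Ak Al : Set (Fin dJ → ℝ)} (h : Disjoint Ak Al) :
    Jq ν a b Ak Al = 0 := by
  simp [Jq, Set.disjoint_iff_inter_eq_empty.1 h]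

lemma Jq_self [IsFiniteMeasure ν] (a b : Fin p) {A : Set (Fin dJ → ℝ)} (hA : MeasurableSet A) :
    Jq ν a b A A = Dab ν a b A / pA ν A := by
  have hS : MeasurableSet {x : RVec p dJ | x.2 ∈ A} := measurable_snd hA
  have hDab : Dab ν a b A = (ν.prod ν).real (ltPairsIn a b A) := rfl
  rw [Jq, PA, integral_cond, ← integral_indicator hS, div_eq_inv_mul, hDab,
    ← integral_integral_symmetrized_indicator ν (measurableSet_ltPairsIn a b hA)]
  congr 2 with x
  simp_rw [← kerPi_mul_indicator_eq, integral_const_mul]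
  by_cases hx : x.2 ∈ A <;> simp [hx]

lemma CondMarginContinuous.ae_prod_ne [IsFiniteMeasure ν] {a : Fin p} {A : Set (Fin dJ → ℝ)}
    (h : CondMarginContinuous ν a A) (hA : MeasurableSet A) :
    ∀ᵐ q ∂ν.prod ν, q.2.2 ∈ A → q.1.1 a ≠ q.2.1 a := by
  have hS : MeasurableSet {x : RVec p dJ | x.2 ∈ A} := measurable_snd hA
  refine ae_prod_ne_of_measure_inter_fiber_eq_zero ν (measurable_pi_apply a |>.comp measurable_fst)
    hS fun t => ?_
  have ht := h t
  rw [PA, cond_apply hS, mul_eq_zero] at ht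
  exact ht.resolve_left (ENNReal.inv_ne_zero.2 (measure_ne_top ν _))

lemma measureReal_pairsIn [SFinite ν] (A : Set (Fin dJ → ℝ)) :
    (ν.prod ν).real (pairsIn A) = pA ν A ^ 2 := by
  rw [show pairsIn A = {x : RVec p dJ | x.2 ∈ A} ×ˢ {x | x.2 ∈ A} from rfl,
    measureReal_prod_prod, sq]
  rfl

lemma pairsIn_inter_concordant (a b : Fin p) (A : Set (Fin dJ → ℝ)) :
    pairsIn A ∩ concordant a b = ltPairsIn a b A ∪ Prod.swap ⁻¹' ltPairsIn a b A := by
  ext q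
  simp only [pairsIn, concordant, ltPairsIn, Set.mem_inter_iff, Set.mem_ofPred_eq,
    Set.mem_union, Set.mem_preimage, Prod.fst_swap, Prod.snd_swap, mul_pos_iff, sub_pos, sub_neg]
  tauto

lemma measureReal_pairsIn_inter_concordant [IsFiniteMeasure ν] (a b : Fin p)
    {A : Set (Fin dJ → ℝ)} (hA : MeasurableSet A) :
    (ν.prod ν).real (pairsIn A ∩ concordant a b) = 2 * Dab ν a b A := by
  have hD := measurableSet_ltPairsIn a b hA
  have hdisj : Disjoint (ltPairsIn a b A) (Prod.swap ⁻¹' ltPairsIn a b A) :=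
    Set.disjoint_left.2 fun q h h' => lt_asymm h.1 h'.1
  rw [pairsIn_inter_concordant, measureReal_union hdisj (measurable_swap hD),
    measureReal_prod_swap_preimage ν hD, two_mul]
  rfl

lemma pairsIn_inter_discordant_ae_eq [IsFiniteMeasure ν] {a b : Fin p} {A : Set (Fin dJ → ℝ)}
    (hA : MeasurableSet A) (ha : CondMarginContinuous ν a A) (hb : CondMarginContinuous ν b A) :
    (pairsIn A ∩ discordant a b : Set _) =ᵐ[ν.prod ν] (pairsIn A \ concordant a b : Set _) := by
  filter_upwards [ha.ae_prod_ne ν hA, hb.ae_prod_ne ν hA] with q hqa hqb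
  change (q ∈ pairsIn A ∩ discordant a b) = (q ∈ pairsIn A \ concordant a b)
  simp only [pairsIn, concordant, discordant, Set.mem_inter_iff, Set.mem_sdiff,
    Set.mem_ofPred_eq, not_lt, eq_iff_iff]
  exact and_congr_right fun hq => ⟨le_of_lt, fun h => h.lt_of_ne
    (mul_ne_zero (sub_ne_zero.2 (hqa hq.2)) (sub_ne_zero.2 (hqb hq.2)))⟩

lemma condTau_eq_of_condMarginContinuous [IsFiniteMeasure ν] {a b : Fin p}
    {A : Set (Fin dJ → ℝ)} (hA : MeasurableSet A) (hpA : 0 < pA ν A)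
    (ha : CondMarginContinuous ν a A) (hb : CondMarginContinuous ν b A) :
    condTau ν a b A = 4 * Dab ν a b A / pA ν A ^ 2 - 1 := by
  have hC := measurableSet_pairsIn (p := p) hA
  have hdiscordant : (ν.prod ν).real (pairsIn A ∩ discordant a b) =
      (ν.prod ν).real (pairsIn A) - (ν.prod ν).real (pairsIn A ∩ concordant a b) := by
    rw [measureReal_congr (pairsIn_inter_discordant_ae_eq ν hA ha hb),
      ← measureReal_inter_add_sdiff (s := pairsIn A) (measurableSet_concordant a b)]
    ring
  change ((ν.prod ν)[|pairsIn A]).real (concordant a b) -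
      ((ν.prod ν)[|pairsIn A]).real (discordant a b) = _
  rw [measureReal_cond_apply hC, measureReal_cond_apply hC,
    hdiscordant, measureReal_pairsIn, measureReal_pairsIn_inter_concordant ν a b hA]
  field_simp
  ring

end CondKT

theorem stmt6_general {p dJ m : ℕ}
    (ν : Measure (RVec p dJ)) [IsProbabilityMeasure ν]
    (A : Fin m → Set (Fin dJ → ℝ)) (hA : ∀ k, MeasurableSet (A k))
    (hpk : ∀ k, 0 < pA ν (A k))
    (hdisj : ∀ k l, k ≠ l → A k ∩ A l = ∅)
    (hcont : ∀ (k : Fin m) (a : Fin p), CondMarginContinuous ν a (A k)) :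
    ∀ (a b a' b' : Fin p), a < b → a' < b' →
      (Matrix.of fun k l : Fin m =>
          64 * (Iq ν a b a' b' (A k) (A l) / (pA ν (A k) * pA ν (A l)) +
            Dab ν a b (A k) * Dab ν a' b' (A l) * pAA ν (A k) (A l) /
              (pA ν (A k) ^ 3 * pA ν (A l) ^ 3) -
            Dab ν a' b' (A l) * Jq ν a b (A k) (A l) / (pA ν (A k) * pA ν (A l) ^ 3) -
            Dab ν a b (A k) * Jq ν a' b' (A l) (A k) / (pA ν (A l) * pA ν (A k) ^ 3))) =
        Matrix.diagonal (fun k =>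
          16 * (4 * Iq ν a b a' b' (A k) (A k) / pA ν (A k) ^ 2 -
            (1 + condTau ν a b (A k)) * (1 + condTau ν a' b' (A k)) / (4 * pA ν (A k)))) := by
  intro a b a' b' _ _
  ext k l
  rcases eq_or_ne k l with rfl | hkl
  · have hp : pA ν (A k) ≠ 0 := (hpk k).ne'
    rw [Matrix.of_apply, Matrix.diagonal_apply_eq, pAA_self, Jq_self ν a b (hA k),
      Jq_self ν a' b' (hA k),
      condTau_eq_of_condMarginContinuous ν (hA k) (hpk k) (hcont k a) (hcont k b),
      condTau_eq_of_condMarginContinuous ν (hA k) (hpk k) (hcont k a') (hcont k b')]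
    field_simp
    ring
  · have hd : Disjoint (A k) (A l) := Set.disjoint_iff_inter_eq_empty.2 (hdisj k l hkl)
    rw [Matrix.of_apply, Matrix.diagonal_apply_ne _ hkl, Iq_eq_zero_of_disjoint ν _ _ _ _ hd,
      Jq_eq_zero_of_disjoint ν _ _ hd, Jq_eq_zero_of_disjoint ν _ _ hd.symm,
      pAA_eq_zero_of_disjoint ν hd]
    ring

/-- **Diagonal form of the blocks `Δ_{(a,b),(a',b')}` of the asymptotic covariance matrix for
pairwise disjoint conditioning subsets (general dimension `p`).** -/
theorem stmt6 {p dJ m : ℕ} (hp2 : 2 ≤ p)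
    (ν : Measure (RVec p dJ)) [IsProbabilityMeasure ν]
    (A : Fin m → Set (Fin dJ → ℝ)) (hA : ∀ k, MeasurableSet (A k))
    (hpk : ∀ k, 0 < pA ν (A k))
    (hdisj : ∀ k l, k ≠ l → A k ∩ A l = ∅)
    (hcont : ∀ (k : Fin m) (a : Fin p), CondMarginContinuous ν a (A k)) :
    ∀ (a b a' b' : Fin p), a < b → a' < b' →
      (Matrix.of fun k l : Fin m =>
          64 * (Iq ν a b a' b' (A k) (A l) / (pA ν (A k) * pA ν (A l)) +
            Dab ν a b (A k) * Dab ν a' b' (A l) * pAA ν (A k) (A l) /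
              (pA ν (A k) ^ 3 * pA ν (A l) ^ 3) -
            Dab ν a' b' (A l) * Jq ν a b (A k) (A l) / (pA ν (A k) * pA ν (A l) ^ 3) -
            Dab ν a b (A k) * Jq ν a' b' (A l) (A k) / (pA ν (A l) * pA ν (A k) ^ 3))) =
        Matrix.diagonal (fun k =>
          16 * (4 * Iq ν a b a' b' (A k) (A k) / pA ν (A k) ^ 2 -
            (1 + condTau ν a b (A k)) * (1 + condTau ν a' b' (A k)) / (4 * pA ν (A k)))) :=
  stmt6_general ν A hA hpk hdisj hcont
end
end

section
/- There exists a trivariate random vector (X₁, X₂, X₃) — explicitly: X₃ uniform on [0,4]; given X₃ = x with x ∈ [0,1], X₁ and X₂ are independent and each uniform on [0,1]; given x ∈ (1,2], X₁ and X₂ are independent and each uniform on [2,3]; given x ∈ (2,3], X₁ and X₂ are independent with X₁ uniform on [0,1] and X₂ uniform on [2,3]; given x ∈ (3,4], X₁ and X₂ are independent with X₁ uniform on [2,3] and X₂ uniform on [0,1] — such that the pointwise conditional Kendall's tau satisfies τ_{1,2|X₃=x} = 0 for every x ∈ [0,4], while the subset-conditional Kendall's taus satisfy τ_{1,2|X₃∈[0,2]}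 = 1/2 and τ_{1,2|X₃∈(2,4]} = −1/2. Hence constancy of the pointwise conditional Kendall's tau does not imply constancy of the subset-conditional Kendall's tau. -/
/- Common framework: conditional Kendall's tau given discretized conditioning events.

An observation is a pair `(x_I, x_J) : (Fin p → ℝ) × (Fin dJ → ℝ)`, where `x_I` is the
conditioned vector and `x_J` the conditioning vector. -/

open MeasureTheory ProbabilityTheory Filter Finset
open scoped Topology Classical

noncomputable section

namespace CondKT

/-- Kendall's tau of a bivariate distribution `μ`. -/
def ktau2 (μ : Measure (ℝ × ℝ)) : ℝ :=
  ((μ.prod μ) {q : (ℝ × ℝ) × (ℝ × ℝ) | 0 < (q.1.1 - q.2.1) * (q.1.2 - q.2.2)}).toReal -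
    ((μ.prod μ) {q : (ℝ × ℝ) × (ℝ × ℝ) | (q.1.1 - q.2.1) * (q.1.2 - q.2.2) < 0}).toReal

/-- The subset-conditional Kendall's tau `τ_{1,2|X₃ ∈ A}` of a trivariate
distribution `μ` (the law of `(X₁, X₂, X₃)`). -/
def sCKT (μ : Measure (ℝ × ℝ × ℝ)) (A : Set ℝ) : ℝ :=
  (((μ.prod μ)[|{q : (ℝ × ℝ × ℝ) × (ℝ × ℝ × ℝ) | q.1.2.2 ∈ A ∧ q.2.2.2 ∈ A}])
      {q : (ℝ × ℝ × ℝ) × (ℝ × ℝ × ℝ) | 0 < (q.1.1 - q.2.1) * (q.1.2.1 - q.2.2.1)}).toReal -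
    (((μ.prod μ)[|{q : (ℝ × ℝ × ℝ) × (ℝ × ℝ × ℝ) | q.1.2.2 ∈ A ∧ q.2.2.2 ∈ A}])
      {q : (ℝ × ℝ × ℝ) × (ℝ × ℝ × ℝ) | (q.1.1 - q.2.1) * (q.1.2.1 - q.2.2.1) < 0}).toReal

/-- The uniform distribution on `[a, b]`. -/
def unif (a b : ℝ) : Measure ℝ := (volume : Measure ℝ)[|Set.Icc a b]

end CondKT

open CondKT

/-!
Take the law `unif 0 4 ⊗ₘ κ`, so that `κ` is the conditional law of `(X₁, X₂)` given `X₃` by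
construction. Each `κ x` is a product measure, and for independent coordinates concordance and
discordance are equally likely, so the pointwise tau vanishes. Given `X₃ ∈ [0, 2]`, however,
`(X₁, X₂)` is the equal mixture of the uniform laws on `[0, 1]²` and `[2, 3]²`: two independent
draws from it come from different components with probability `1/2`, and are then always
concordant, while draws from the same component contribute `0`. So the tau is `1/2`. Given
`X₃ ∈ (2, 4]` the components are `[0, 1] × [2, 3]` and `[2, 3] × [0, 1]`, whose cross draws are
always discordant, giving `-1/2`.
-/

open scoped ENNReal

namespace CondKT

section Concordance

def concordantSet : Set ((ℝ × ℝ) × (ℝ × ℝ)) := {q | 0 < (q.1.1 - q.2.1) * (q.1.2 - q.2.2)}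

def discordantSet : Set ((ℝ × ℝ) × (ℝ × ℝ)) := {q | (q.1.1 - q.2.1) * (q.1.2 - q.2.2) < 0}

lemma measurableSet_concordantSet : MeasurableSet concordantSet :=
  measurableSet_lt measurable_const (by fun_prop)

lemma measurableSet_discordantSet : MeasurableSet discordantSet :=
  measurableSet_lt (by fun_prop) measurable_const

def concordance (μ ν : Measure (ℝ × ℝ)) : ℝ :=
  (μ.prod ν).real concordantSet - (μ.prod ν).real discordantSet

lemma ktau2_eq_concordance (μ : Measure (ℝ × ℝ)) : ktau2 μ = concordance μ μ := rfl

variable {μ μ' ν ν' : Measure (ℝ × ℝ)}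

lemma concordance_add_left [IsFiniteMeasure μ] [IsFiniteMeasure μ'] [IsFiniteMeasure ν] :
    concordance (μ + μ') ν = concordance μ ν + concordance μ' ν := by
  rw [concordance, concordance, concordance, Measure.add_prod, measureReal_add_apply,
    measureReal_add_apply]
  ring

lemma concordance_add_right [IsFiniteMeasure μ] [IsFiniteMeasure ν] [IsFiniteMeasure ν'] :
    concordance μ (ν + ν') = concordance μ ν + concordance μ ν' := by
  rw [concordance, concordance, concordance, Measure.prod_add, measureReal_add_apply,
    measureReal_add_apply]
  ring

lemma concordance_smul_left [SFinite ν] (c : ℝ≥0∞) :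
    concordance (c • μ) ν = c.toReal * concordance μ ν := by
  simp only [concordance, Measure.prod_smul_left, measureReal_ennreal_smul_apply]
  ring

lemma concordance_smul_right [SFinite ν] (c : ℝ≥0∞) :
    concordance μ (c • ν) = c.toReal * concordance μ ν := by
  simp only [concordance, Measure.prod_smul_right, measureReal_ennreal_smul_apply]
  ring

lemma ktau2_half_smul_add [IsFiniteMeasure μ] [IsFiniteMeasure ν] :
    ktau2 ((2 : ℝ≥0∞)⁻¹ • (μ + ν)) =
      (ktau2 μ + concordance μ ν + concordance ν μ + ktau2 ν) / 4 := by
  simp only [ktau2_eq_concordance, concordance_smul_left, concordance_smul_right,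
    concordance_add_left, concordance_add_right, ENNReal.toReal_inv, ENNReal.toReal_ofNat]
  ring

lemma concordance_eq_one [IsProbabilityMeasure μ] [IsProbabilityMeasure ν]
    {s t : Set (ℝ × ℝ)} (hs : ∀ᵐ p ∂μ, p ∈ s) (ht : ∀ᵐ q ∂ν, q ∈ t)
    (h : ∀ p ∈ s, ∀ q ∈ t, 0 < (p.1 - q.1) * (p.2 - q.2)) :
    concordance μ ν = 1 := by
  have hconc : ∀ᵐ q ∂μ.prod ν, q ∈ concordantSet :=
    (Measure.ae_prod_mem_iff_ae_ae_mem measurableSet_concordantSet).2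
      (hs.mono fun p hp => ht.mono fun q hq => h p hp q hq)
  have hdisc : (μ.prod ν) discordantSet = 0 :=
    measure_eq_zero_iff_ae_notMem.2 (hconc.mono fun _ hc hd => lt_asymm (α := ℝ) hc hd)
  rw [concordance, measureReal_def, measureReal_def, hdisc,
    (mem_ae_iff_prob_eq_one measurableSet_concordantSet).1 hconc]
  simp

lemma concordance_eq_neg_one [IsProbabilityMeasure μ] [IsProbabilityMeasure ν]
    {s t : Set (ℝ × ℝ)} (hs : ∀ᵐ p ∂μ, p ∈ s) (ht : ∀ᵐ q ∂ν, q ∈ t)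
    (h : ∀ p ∈ s, ∀ q ∈ t, (p.1 - q.1) * (p.2 - q.2) < 0) :
    concordance μ ν = -1 := by
  have hdisc : ∀ᵐ q ∂μ.prod ν, q ∈ discordantSet :=
    (Measure.ae_prod_mem_iff_ae_ae_mem measurableSet_discordantSet).2
      (hs.mono fun p hp => ht.mono fun q hq => h p hp q hq)
  have hconc : (μ.prod ν) concordantSet = 0 :=
    measure_eq_zero_iff_ae_notMem.2 (hdisc.mono fun _ hd hc => lt_asymm (α := ℝ) hc hd)
  rw [concordance, measureReal_def, measureReal_def, hconc,
    (mem_ae_iff_prob_eq_one measurableSet_discordantSet).1 hdisc]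
  simp

end Concordance

section Independent

lemma lintegral_prod_mul_add_mul {α β : Type*} [MeasurableSpace α] [MeasurableSpace β]
    {μ : Measure α} {ν : Measure β} [SFinite ν] {f f' : α → ℝ≥0∞} {g g' : β → ℝ≥0∞}
    (hf : Measurable f) (hg : Measurable g) (hf' : Measurable f') (hg' : Measurable g') :
    ∫⁻ z, f z.1 * g z.2 + f' z.1 * g' z.2 ∂μ.prod ν =
      (∫⁻ x, f x ∂μ) * (∫⁻ y, g y ∂ν) + (∫⁻ x, f' x ∂μ) * ∫⁻ y, g' y ∂ν := by
  rw [lintegral_add_left (by fun_prop), lintegral_prod_mul hf.aemeasurable hg.aemeasurable,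
    lintegral_prod_mul hf'.aemeasurable hg'.aemeasurable]

lemma prod_apply_union_prod_of_disjoint {α β : Type*} [MeasurableSpace α] [MeasurableSpace β]
    {μ : Measure α} {ν : Measure β} [SFinite ν] {s s' : Set α} {t t' : Set β}
    (hss' : Disjoint s s') (hs' : MeasurableSet s') (ht' : MeasurableSet t') :
    (μ.prod ν) (s ×ˢ t ∪ s' ×ˢ t') = μ s * ν t + μ s' * ν t' := by
  rw [measure_union (Set.disjoint_prod.2 (Or.inl hss')) (hs'.prod ht'), Measure.prod_prod,
    Measure.prod_prod]

-- Both sides are `(m ⊗ m) {(a, a') | a' < a}`, sliced along either coordinate.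
lemma lintegral_measure_Iio_eq_lintegral_measure_Ioi (m : Measure ℝ) [SFinite m] :
    ∫⁻ a, m (Set.Iio a) ∂m = ∫⁻ a, m (Set.Ioi a) ∂m := by
  have hs : MeasurableSet {p : ℝ × ℝ | p.2 < p.1} := measurableSet_lt (by fun_prop) (by fun_prop)
  exact (Measure.prod_apply hs).symm.trans (Measure.prod_apply_symm hs)

lemma preimage_mk_concordantSet (p : ℝ × ℝ) :
    Prod.mk p ⁻¹' concordantSet =
      Set.Iio p.1 ×ˢ Set.Iio p.2 ∪ Set.Ioi p.1 ×ˢ Set.Ioi p.2 := by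
  ext q
  simp [concordantSet, mul_pos_iff, sub_pos, sub_neg]

lemma preimage_mk_discordantSet (p : ℝ × ℝ) :
    Prod.mk p ⁻¹' discordantSet =
      Set.Iio p.1 ×ˢ Set.Ioi p.2 ∪ Set.Ioi p.1 ×ˢ Set.Iio p.2 := by
  ext q
  simp [discordantSet, mul_neg_iff, sub_pos, sub_neg]

variable (m n : Measure ℝ) [SFinite m] [SFinite n]

/- Slicing at the first copy `(a, b)`, the two sides are `I⁻J⁻ + I⁺J⁺` and `I⁻J⁺ + I⁺J⁻` with
`I⁻ = ∫ m(<a) dm(a)`, `I⁺ = ∫ m(>a) dm(a)` and likewise `J±` for `n`; and `I⁻ = I⁺`. -/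
lemma prod_prod_concordantSet_eq_discordantSet :
    ((m.prod n).prod (m.prod n)) concordantSet = ((m.prod n).prod (m.prod n)) discordantSet := by
  have hIio (μ : Measure ℝ) : Measurable fun a => μ (Set.Iio a) :=
    Monotone.measurable fun _ _ h => measure_mono (Set.Iio_subset_Iio h)
  have hIoi (μ : Measure ℝ) : Measurable fun a => μ (Set.Ioi a) :=
    Antitone.measurable fun _ _ h => measure_mono (Set.Ioi_subset_Ioi h)
  have hdisj (a : ℝ) : Disjoint (Set.Iio a) (Set.Ioi a) := Set.Ioi_disjoint_Iio_same.symm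
  rw [Measure.prod_apply measurableSet_concordantSet,
    Measure.prod_apply measurableSet_discordantSet]
  simp_rw [preimage_mk_concordantSet, preimage_mk_discordantSet,
    prod_apply_union_prod_of_disjoint (hdisj _) measurableSet_Ioi measurableSet_Ioi,
    prod_apply_union_prod_of_disjoint (hdisj _) measurableSet_Ioi measurableSet_Iio]
  rw [lintegral_prod_mul_add_mul (hIio m) (hIio n) (hIoi m) (hIoi n),
    lintegral_prod_mul_add_mul (hIio m) (hIoi n) (hIoi m) (hIio n),
    lintegral_measure_Iio_eq_lintegral_measure_Ioi m,
    lintegral_measure_Iio_eq_lintegral_measure_Ioi n]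

lemma ktau2_prod : ktau2 (m.prod n) = 0 := by
  rw [ktau2_eq_concordance, concordance, measureReal_def, measureReal_def,
    prod_prod_concordantSet_eq_discordantSet, sub_self]

end Independent

section Conditioning

variable {α β : Type*} [MeasurableSpace α] [MeasurableSpace β]

lemma cond_prod_cond (μ : Measure α) (ν : Measure β) [IsFiniteMeasure μ] [IsFiniteMeasure ν]
    (s : Set α) (t : Set β) : (μ.prod ν)[|s ×ˢ t] = μ[|s].prod ν[|t] := by
  simp only [ProbabilityTheory.cond, Measure.prod_prod, Measure.prod_smul_left,
    Measure.prod_smul_right, Measure.prod_restrict, smul_smul,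
    ENNReal.mul_inv (Or.inr (measure_ne_top _ _)) (Or.inl (measure_ne_top _ _))]
  rw [mul_comm]

lemma map_cond (μ : Measure α) {f : α → β} (hf : Measurable f) {s : Set β}
    (hs : MeasurableSet s) : (μ.map f)[|s] = (μ[|f ⁻¹' s]).map f := by
  simp only [ProbabilityTheory.cond, Measure.map_smul, Measure.restrict_map hf hs,
    Measure.map_apply hf hs]

lemma snd_cond_fst_preimage_compProd (μ : Measure α) [IsFiniteMeasure μ] (κ : Kernel α β)
    [IsMarkovKernel κ] {s : Set α} (hs : MeasurableSet s) :
    ((μ ⊗ₘ κ)[|Prod.fst ⁻¹' s]).snd = κ ∘ₘ μ[|s] := by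
  ext B hB
  have hfst : (μ ⊗ₘ κ) (Prod.fst ⁻¹' s) = μ s := by
    rw [← Measure.fst_apply hs, Measure.fst_compProd]
  rw [Measure.snd_apply hB, cond_apply (measurable_fst hs), hfst, ← Set.prod_eq,
    Measure.compProd_apply_prod hs hB, Measure.bind_apply hB κ.aemeasurable,
    ProbabilityTheory.cond, lintegral_smul_measure, smul_eq_mul]

lemma comp_restrict_of_forall_eq (μ : Measure α) {κ : Kernel α β} {ρ : Measure β} {s : Set α}
    (hs : MeasurableSet s) (h : ∀ x ∈ s, κ x = ρ) : κ ∘ₘ μ.restrict s = μ s • ρ := by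
  ext B hB
  rw [Measure.bind_apply hB κ.aemeasurable, setLIntegral_congr_fun hs fun x hx => by rw [h x hx],
    setLIntegral_const, Measure.smul_apply, smul_eq_mul, mul_comm]

lemma comp_cond_union_of_forall_eq (μ : Measure α) {κ : Kernel α β} {ρ ρ' : Measure β}
    {s t : Set α} (hst : Disjoint s t) (hs : MeasurableSet s) (ht : MeasurableSet t)
    (hμs : μ s = 1) (hμt : μ t = 1) (hκs : ∀ x ∈ s, κ x = ρ) (hκt : ∀ x ∈ t, κ x = ρ') :
    κ ∘ₘ μ[|s ∪ t] = (2 : ℝ≥0∞)⁻¹ • (ρ + ρ') := by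
  rw [ProbabilityTheory.cond, measure_union hst ht, Measure.restrict_union hst ht,
    Measure.comp_smul, Measure.comp_add, comp_restrict_of_forall_eq μ hs hκs,
    comp_restrict_of_forall_eq μ ht hκt, hμs, hμt, one_smul, one_smul, one_add_one_eq_two]

end Conditioning

lemma sCKT_eq_ktau2_map_cond (μ : Measure (ℝ × ℝ × ℝ)) [IsFiniteMeasure μ] (A : Set ℝ) :
    sCKT μ A = ktau2 ((μ[|{z | z.2.2 ∈ A}]).map fun z => (z.1, z.2.1)) := by
  have hf : Measurable fun z : ℝ × ℝ × ℝ => (z.1, z.2.1) := by fun_prop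
  have hS : {q : (ℝ × ℝ × ℝ) × (ℝ × ℝ × ℝ) | q.1.2.2 ∈ A ∧ q.2.2.2 ∈ A} =
      {z | z.2.2 ∈ A} ×ˢ {z | z.2.2 ∈ A} := rfl
  rw [sCKT, hS, cond_prod_cond, ktau2_eq_concordance, concordance,
    Measure.map_prod_map _ _ hf hf, measureReal_def, measureReal_def,
    Measure.map_apply (hf.prodMap hf) measurableSet_concordantSet,
    Measure.map_apply (hf.prodMap hf) measurableSet_discordantSet]
  rfl

section Uniform

variable {a b c d : ℝ}

lemma isProbabilityMeasure_unif (h : a < b) : IsProbabilityMeasure (unif a b) :=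
  cond_isProbabilityMeasure_of_finite (by simp [h]) measure_Icc_lt_top.ne

instance : IsProbabilityMeasure (unif 0 1) := isProbabilityMeasure_unif (by norm_num)
instance : IsProbabilityMeasure (unif 2 3) := isProbabilityMeasure_unif (by norm_num)
instance : IsProbabilityMeasure (unif 0 4) := isProbabilityMeasure_unif (by norm_num)

lemma ae_mem_prod_unif :
    ∀ᵐ p ∂(unif a b).prod (unif c d), p ∈ Set.Icc a b ×ˢ Set.Icc c d :=
  (Measure.quasiMeasurePreserving_fst.ae (ae_cond_mem measurableSet_Icc)).and
    (Measure.quasiMeasurePreserving_snd.ae (ae_cond_mem measurableSet_Icc))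

lemma unif_cond_of_subset {s : Set ℝ} (hs : MeasurableSet s) (h : s ⊆ Set.Icc a b) :
    (unif a b)[|s] = volume[|s] := by
  rw [unif, cond_cond_eq_cond_inter' measurableSet_Icc hs measure_Icc_lt_top.ne,
    Set.inter_eq_right.2 h]

end Uniform

section Disintegration

variable (ν : Measure ℝ) (κ : Kernel ℝ (ℝ × ℝ))

-- A point `(x₃, (x₁, x₂))` of `ν ⊗ₘ κ` is read as the triple `(x₁, x₂, x₃)`.
def toTriple (ω : ℝ × ℝ × ℝ) : ℝ × ℝ × ℝ := (ω.2.1, ω.2.2, ω.1)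

lemma measurable_toTriple : Measurable toTriple := by
  unfold toTriple
  fun_prop

lemma map_toTriple_compProd_apply [SFinite ν] [IsSFiniteKernel κ] {B : Set (ℝ × ℝ)}
    {C : Set ℝ} (hB : MeasurableSet B) (hC : MeasurableSet C) :
    ((ν ⊗ₘ κ).map toTriple) {z | (z.1, z.2.1) ∈ B ∧ z.2.2 ∈ C} = ∫⁻ x in C, κ x B ∂ν := by
  have hBC : MeasurableSet {z : ℝ × ℝ × ℝ | (z.1, z.2.1) ∈ B ∧ z.2.2 ∈ C} :=
    ((measurable_fst.prodMk measurable_snd.fst) hB).inter (measurable_snd.snd hC)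
  rw [Measure.map_apply measurable_toTriple hBC, ← Measure.compProd_apply_prod hC hB]
  congr 1
  ext ω
  exact and_comm

lemma sCKT_map_toTriple_compProd [IsFiniteMeasure ν] [IsMarkovKernel κ] {A : Set ℝ}
    (hA : MeasurableSet A) : sCKT ((ν ⊗ₘ κ).map toTriple) A = ktau2 (κ ∘ₘ ν[|A]) := by
  have hA' : MeasurableSet {z : ℝ × ℝ × ℝ | z.2.2 ∈ A} := measurable_snd.snd hA
  rw [sCKT_eq_ktau2_map_cond, map_cond _ measurable_toTriple hA',
    Measure.map_map (by fun_prop) measurable_toTriple, ← snd_cond_fst_preimage_compProd ν κ hA]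
  rfl

end Disintegration

section Example

def exampleKernel : Kernel ℝ (ℝ × ℝ) :=
  Kernel.piecewise (measurableSet_Iic (a := 1)) (Kernel.const ℝ ((unif 0 1).prod (unif 0 1)))
    (Kernel.piecewise (measurableSet_Iic (a := 2)) (Kernel.const ℝ ((unif 2 3).prod (unif 2 3)))
      (Kernel.piecewise (measurableSet_Iic (a := 3))
        (Kernel.const ℝ ((unif 0 1).prod (unif 2 3)))
        (Kernel.const ℝ ((unif 2 3).prod (unif 0 1)))))

instance : IsMarkovKernel exampleKernel := by
  unfold exampleKernel
  infer_instance

lemma exampleKernel_apply (x : ℝ) : exampleKernel x =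
    if x ≤ 1 then (unif 0 1).prod (unif 0 1)
    else if x ≤ 2 then (unif 2 3).prod (unif 2 3)
    else if x ≤ 3 then (unif 0 1).prod (unif 2 3)
    else (unif 2 3).prod (unif 0 1) := by
  simp [exampleKernel, Kernel.piecewise_apply]

lemma exampleKernel_apply_of_mem_Icc_zero_one :
    ∀ x ∈ Set.Icc (0 : ℝ) 1, exampleKernel x = (unif 0 1).prod (unif 0 1) := by
  rintro x ⟨-, hx⟩
  rw [exampleKernel_apply, if_pos hx]

lemma exampleKernel_apply_of_mem_Ioc_one_two :
    ∀ x ∈ Set.Ioc (1 : ℝ) 2, exampleKernel x = (unif 2 3).prod (unif 2 3) := by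
  rintro x ⟨hx₁, hx₂⟩
  rw [exampleKernel_apply, if_neg hx₁.not_ge, if_pos hx₂]

lemma exampleKernel_apply_of_mem_Ioc_two_three :
    ∀ x ∈ Set.Ioc (2 : ℝ) 3, exampleKernel x = (unif 0 1).prod (unif 2 3) := by
  rintro x ⟨hx₁, hx₂⟩
  rw [exampleKernel_apply, if_neg (by linarith), if_neg hx₁.not_ge, if_pos hx₂]

lemma exampleKernel_apply_of_mem_Ioc_three_four :
    ∀ x ∈ Set.Ioc (3 : ℝ) 4, exampleKernel x = (unif 2 3).prod (unif 0 1) := by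
  rintro x ⟨hx₁, -⟩
  rw [exampleKernel_apply, if_neg (by linarith), if_neg (by linarith), if_neg hx₁.not_ge]

lemma ktau2_exampleKernel (x : ℝ) : ktau2 (exampleKernel x) = 0 := by
  rw [exampleKernel_apply]
  split_ifs <;> exact ktau2_prod _ _

lemma ktau2_exampleKernel_comp_cond_Icc_zero_two :
    ktau2 (exampleKernel ∘ₘ (unif 0 4)[|Set.Icc 0 2]) = 1 / 2 := by
  have hlow : ∀ p ∈ Set.Icc (0 : ℝ) 1 ×ˢ Set.Icc (0 : ℝ) 1,
      ∀ q ∈ Set.Icc (2 : ℝ) 3 ×ˢ Set.Icc (2 : ℝ) 3, p.1 < q.1 ∧ p.2 < q.2 :=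
    fun p hp q hq => ⟨by linarith [hp.1.2, hq.1.1], by linarith [hp.2.2, hq.2.1]⟩
  have h₁₂ : concordance ((unif 0 1).prod (unif 0 1)) ((unif 2 3).prod (unif 2 3)) = 1 :=
    concordance_eq_one ae_mem_prod_unif ae_mem_prod_unif fun p hp q hq =>
      mul_pos_of_neg_of_neg (sub_neg.2 (hlow p hp q hq).1) (sub_neg.2 (hlow p hp q hq).2)
  have h₂₁ : concordance ((unif 2 3).prod (unif 2 3)) ((unif 0 1).prod (unif 0 1)) = 1 :=
    concordance_eq_one ae_mem_prod_unif ae_mem_prod_unif fun q hq p hp =>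
      mul_pos (sub_pos.2 (hlow p hp q hq).1) (sub_pos.2 (hlow p hp q hq).2)
  rw [unif_cond_of_subset measurableSet_Icc (Set.Icc_subset_Icc le_rfl (by norm_num)),
    ← Set.Icc_union_Ioc_eq_Icc zero_le_one one_le_two,
    comp_cond_union_of_forall_eq volume
      (Set.disjoint_left.2 fun x hx hx' => hx'.1.not_ge hx.2) measurableSet_Icc
      measurableSet_Ioc (by simp) (by norm_num) exampleKernel_apply_of_mem_Icc_zero_one
      exampleKernel_apply_of_mem_Ioc_one_two,
    ktau2_half_smul_add, ktau2_prod, ktau2_prod, h₁₂, h₂₁]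
  norm_num

lemma ktau2_exampleKernel_comp_cond_Ioc_two_four :
    ktau2 (exampleKernel ∘ₘ (unif 0 4)[|Set.Ioc 2 4]) = -(1 / 2) := by
  have hcross : ∀ p ∈ Set.Icc (0 : ℝ) 1 ×ˢ Set.Icc (2 : ℝ) 3,
      ∀ q ∈ Set.Icc (2 : ℝ) 3 ×ˢ Set.Icc (0 : ℝ) 1, p.1 < q.1 ∧ q.2 < p.2 :=
    fun p hp q hq => ⟨by linarith [hp.1.2, hq.1.1], by linarith [hp.2.1, hq.2.2]⟩
  have h₃₄ : concordance ((unif 0 1).prod (unif 2 3)) ((unif 2 3).prod (unif 0 1)) = -1 :=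
    concordance_eq_neg_one ae_mem_prod_unif ae_mem_prod_unif fun p hp q hq =>
      mul_neg_of_neg_of_pos (sub_neg.2 (hcross p hp q hq).1) (sub_pos.2 (hcross p hp q hq).2)
  have h₄₃ : concordance ((unif 2 3).prod (unif 0 1)) ((unif 0 1).prod (unif 2 3)) = -1 :=
    concordance_eq_neg_one ae_mem_prod_unif ae_mem_prod_unif fun q hq p hp =>
      mul_neg_of_pos_of_neg (sub_pos.2 (hcross p hp q hq).1) (sub_neg.2 (hcross p hp q hq).2)
  rw [unif_cond_of_subset measurableSet_Ioc
      (Set.Ioc_subset_Icc_self.trans (Set.Icc_subset_Icc (by norm_num) le_rfl)),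
    ← Set.Ioc_union_Ioc_eq_Ioc (by norm_num : (2 : ℝ) ≤ 3) (by norm_num : (3 : ℝ) ≤ 4),
    comp_cond_union_of_forall_eq volume
      (Set.disjoint_left.2 fun x hx hx' => hx'.1.not_ge hx.2) measurableSet_Ioc
      measurableSet_Ioc (by norm_num) (by norm_num) exampleKernel_apply_of_mem_Ioc_two_three
      exampleKernel_apply_of_mem_Ioc_three_four,
    ktau2_half_smul_add, ktau2_prod, ktau2_prod, h₃₄, h₄₃]
  norm_num

end Example

end CondKT

/-- **First counter-example:** a trivariate random vector whose pointwise conditional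
Kendall's tau is constant (equal to 0), while its subset-conditional Kendall's tau is not
constant (being `1/2` given `X₃ ∈ [0,2]` and `-1/2` given `X₃ ∈ (2,4]`). The regular
conditional distribution of `(X₁, X₂)` given `X₃` is given by the kernel `κ`. -/
theorem stmt13 :
    ∃ (Ω : Type) (_ : MeasurableSpace Ω) (P : Measure Ω) (X : Ω → ℝ × ℝ × ℝ)
      (κ : ProbabilityTheory.Kernel ℝ (ℝ × ℝ)),
      IsProbabilityMeasure P ∧ Measurable X ∧ IsMarkovKernel κ ∧
      -- `X₃` is uniform on `[0, 4]`
      P.map (fun ω => (X ω).2.2) = unif 0 4 ∧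
      -- `κ` is a regular conditional distribution of `(X₁, X₂)` given `X₃`
      (∀ (B : Set (ℝ × ℝ)) (C : Set ℝ), MeasurableSet B → MeasurableSet C →
        (P.map X) {z : ℝ × ℝ × ℝ | (z.1, z.2.1) ∈ B ∧ z.2.2 ∈ C} =
          ∫⁻ x in C, κ x B ∂(unif 0 4)) ∧
      -- the explicit conditional structure
      (∀ x ∈ Set.Icc (0 : ℝ) 1, κ x = (unif 0 1).prod (unif 0 1)) ∧
      (∀ x ∈ Set.Ioc (1 : ℝ) 2, κ x = (unif 2 3).prod (unif 2 3)) ∧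
      (∀ x ∈ Set.Ioc (2 : ℝ) 3, κ x = (unif 0 1).prod (unif 2 3)) ∧
      (∀ x ∈ Set.Ioc (3 : ℝ) 4, κ x = (unif 2 3).prod (unif 0 1)) ∧
      -- the pointwise conditional Kendall's tau vanishes everywhere
      (∀ x ∈ Set.Icc (0 : ℝ) 4, ktau2 (κ x) = 0) ∧
      -- while the subset-conditional Kendall's taus differ
      sCKT (P.map X) (Set.Icc 0 2) = 1 / 2 ∧
      sCKT (P.map X) (Set.Ioc 2 4) = -(1 / 2) := by
  refine ⟨ℝ × ℝ × ℝ, inferInstance, unif 0 4 ⊗ₘ exampleKernel, toTriple, exampleKernel,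
    inferInstance, measurable_toTriple, inferInstance, Measure.fst_compProd _ _,
    fun B C hB hC => map_toTriple_compProd_apply _ _ hB hC,
    exampleKernel_apply_of_mem_Icc_zero_one, exampleKernel_apply_of_mem_Ioc_one_two,
    exampleKernel_apply_of_mem_Ioc_two_three, exampleKernel_apply_of_mem_Ioc_three_four,
    fun x _ => ktau2_exampleKernel x, ?_, ?_⟩
  · rw [sCKT_map_toTriple_compProd _ _ measurableSet_Icc,
      ktau2_exampleKernel_comp_cond_Icc_zero_two]
  · rw [sCKT_map_toTriple_compProd _ _ measurableSet_Ioc,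
      ktau2_exampleKernel_comp_cond_Ioc_two_four]
end
end
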